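/- arXiv:1104.2699 — 2 statements merged into one kernel-verified Lean document; each statement's English description precedes it below -/
import Mathlib

section
/- The modified Lucas polynomials satisfy Σ_{k=0}^{⌊n/2⌋} (-s)^k C(n,k) L*_{n-2k}(x,s) = x^n for all n ≥ 0. -/
def lucasP {R : Type*} [CommRing R] (x s : R) : ℕ → R
  | 0 => 2
  | 1 => x
  | n + 2 => x * lucasP x s (n + 1) + s * lucasP x s n

def lucasStar {R : Type*} [CommRing R] (x s : R) (n : ℕ) : R :=
  if n = 0 then 1 else lucasP x s n

/-!
If `α + β = x` and `α * β = -s`, then `L_n(x, s) = α ^ n + β ^ n`. Pairing the terms `k` and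
`n - k` of the binomial expansion of `x ^ n = (α + β) ^ n` gives
`C(n, k) (α β) ^ k (α ^ (n - 2k) + β ^ (n - 2k)) = C(n, k) (-s) ^ k L_(n-2k)`, except for the
unpaired middle term `C(n, n/2) (α β) ^ (n/2)` when `n` is even, which is why `L*_0 = 1`.
Such `α`, `β` exist in `R[T] / (T² - x T - s)`, into which `R` embeds.
-/

open Finset Polynomial

section
variable {R S : Type*} [CommRing R] [CommRing S]

theorem AdjoinRoot.algebraMap_injective_of_monic [Nontrivial R] {g : R[X]} (hg : g.Monic)
    (hdeg : g.natDegree ≠ 0) : Function.Injective (algebraMap R (AdjoinRoot g)) := by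
  have := hg.free_adjoinRoot
  have : Nontrivial (AdjoinRoot g) := Ideal.Quotient.nontrivial_iff.mpr <| by
    rw [Ne, Ideal.span_singleton_eq_top, hg.isUnit_iff]
    rintro rfl
    exact hdeg natDegree_one
  exact FaithfulSMul.algebraMap_injective R _

theorem map_lucasP (f : R →+* S) (x s : R) : ∀ n, f (lucasP x s n) = lucasP (f x) (f s) n
  | 0 => map_ofNat f 2
  | 1 => rfl
  | n + 2 => by simp only [lucasP, map_add, map_mul, map_lucasP]

theorem map_lucasStar (f : R →+* S) (x s : R) (n : ℕ) :
    f (lucasStar x s n) = lucasStar (f x) (f s) n := by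
  unfold lucasStar
  split_ifs
  exacts [map_one f, map_lucasP f x s n]

theorem lucasP_add_neg_mul (α β : R) : ∀ n, lucasP (α + β) (-(α * β)) n = α ^ n + β ^ n
  | 0 => by rw [lucasP, pow_zero, pow_zero, one_add_one_eq_two]
  | 1 => by rw [lucasP, pow_one, pow_one]
  | n + 2 => by rw [lucasP, lucasP_add_neg_mul α β (n + 1), lucasP_add_neg_mul α β n]; ring

theorem mul_pow_mul_lucasStar_add_neg_mul (α β : R) {n k : ℕ} (hk : 2 * k ≤ n) :
    (α * β) ^ k * lucasStar (α + β) (-(α * β)) (n - 2 * k)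
      = α ^ (n - k) * β ^ k + if 2 * k < n then α ^ k * β ^ (n - k) else 0 := by
  obtain ⟨d, rfl⟩ := Nat.exists_eq_add_of_le hk
  rcases Nat.eq_zero_or_pos d with rfl | hd
  · simp [lucasStar, two_mul, mul_pow]
  · rw [lucasStar, if_neg (by omega), if_pos (by omega), lucasP_add_neg_mul,
      show 2 * k + d - 2 * k = d by omega, show 2 * k + d - k = k + d by omega]
    ring

theorem sum_lucasStar_eq_pow_of_roots {x s α β : R} (hx : α + β = x) (hs : α * β = -s)
    (n : ℕ) :
    ∑ k ∈ range (n / 2 + 1), (-s) ^ k * (n.choose k : R) * lucasStar x s (n - 2 * k) =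
      x ^ n := by
  obtain rfl : s = -(α * β) := by rw [hs, neg_neg]
  subst hx
  set g : ℕ → R := fun j ↦ β ^ j * α ^ (n - j) * n.choose j
  calc ∑ k ∈ range (n / 2 + 1), (-(-(α * β))) ^ k * (n.choose k : R)
          * lucasStar (α + β) (-(α * β)) (n - 2 * k)
      = ∑ k ∈ range (n / 2 + 1), (g k + if 2 * k < n then g (n - k) else 0) := by
        refine sum_congr rfl fun k hk ↦ ?_
        rw [neg_neg, mul_right_comm, mul_pow_mul_lucasStar_add_neg_mul α β
          (by rw [mem_range] at hk; omega)]
        split_ifs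
        · have hkn : k ≤ n := by omega
          simp only [g, Nat.choose_symm hkn, Nat.sub_sub_self hkn]
          ring
        · ring
    _ = ∑ k ∈ range (n / 2 + 1), g k + ∑ j ∈ Ico (n / 2 + 1) (n + 1), g j := by
        rw [sum_add_distrib, ← sum_filter]
        congr 1
        refine sum_nbij' (n - ·) (n - ·) ?_ ?_ ?_ ?_ fun _ _ ↦ rfl <;>
          intro k hk <;>
          simp only [mem_filter, mem_range, mem_Ico] at hk ⊢ <;> omega
    _ = (α + β) ^ n := by rw [sum_range_add_sum_Ico g (by omega), add_comm α β, add_pow]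

end

theorem lucasStar_sum {R : Type*} [CommRing R] (x s : R) (n : ℕ) :
    ∑ k ∈ Finset.range (n / 2 + 1),
        (-s) ^ k * (Nat.choose n k : R) * lucasStar x s (n - 2 * k) = x ^ n := by
  nontriviality R
  set q : R[X] := X ^ 2 - C x * X - C s with hq_def
  have hq : q.Monic := by rw [hq_def]; monicity!
  have hdeg : q.natDegree = 2 := by rw [hq_def]; compute_degree!
  have hroot :
      AdjoinRoot.root q * (AdjoinRoot.of q x - AdjoinRoot.root q) = -AdjoinRoot.of q s := by
    have := AdjoinRoot.eval₂_root q
    simp only [q, eval₂_sub, eval₂_mul, eval₂_X_pow, eval₂_X, eval₂_C] at this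
    linear_combination -this
  apply AdjoinRoot.algebraMap_injective_of_monic hq (by omega)
  simp only [map_sum, map_mul, map_pow, map_neg, map_natCast, map_lucasStar,
    AdjoinRoot.algebraMap_eq]
  exact sum_lucasStar_eq_pow_of_roots (add_sub_cancel _ _) hroot n
end

section
/- The q-Fibonacci polynomials Fib_n satisfy the D-recurrence Fib_n(x,s,q) = x Fib_{n-1}(x,s,q) + (q-1) s D Fib_{n-1}(x,s,q) + s Fib_{n-2}(x,s,q), where D is the q-differentiation operator in x: (Df)(x) = (f(x) - f(qx))/((1-q)x). -/
def qFib {K : Type*} [Field K] (q : K) : ℕ → K → K → K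
  | 0, _, _ => 0
  | 1, _, _ => 1
  | n + 2, x, s => x * qFib q (n + 1) x (q * s) + q * s * qFib q n x (q * s)

/-! The defining recursion of `qFib` rescales `s ↦ q s`, whereas the D-recurrence keeps `s` and
compares the values at `x` and `q x`. Since `(q - 1) D f = (f(q x) - f(x)) / x`, multiplying the
D-recurrence by `x` turns it into a polynomial identity valid for every `q`, and its instances for
`(n + 1, q s)` and `(n, q s)` combine linearly, through the defining recursion, into its instance for
`(n + 2, s)`. -/

theorem x_mul_qFib_add_two {K : Type*} [Field K] (q : K) :
    ∀ (n : ℕ) (x s : K), x * qFib q (n + 2) x s =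
      x * (x * qFib q (n + 1) x s + s * qFib q n x s) +
        s * (qFib q (n + 1) (q * x) s - qFib q (n + 1) x s)
  | 0, x, s => by simp only [qFib]; ring
  | 1, x, s => by simp only [qFib]; ring
  | n + 2, x, s => by
    have h₁ := x_mul_qFib_add_two q (n + 1) x (q * s)
    have h₀ := x_mul_qFib_add_two q n x (q * s)
    simp only [qFib] at h₁ h₀ ⊢
    linear_combination x * h₁ + s * h₀

theorem qFib_D_recurrence {K : Type*} [Field K] (q x s : K) (hq : q ≠ 1) (hx : x ≠ 0)
    (n : ℕ) (hn : 2 ≤ n) :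
    qFib q n x s =
      x * qFib q (n - 1) x s +
        (q - 1) * s * ((qFib q (n - 1) x s - qFib q (n - 1) (q * x) s) / ((1 - q) * x)) +
        s * qFib q (n - 2) x s := by
  obtain ⟨m, rfl⟩ : ∃ m, n = m + 2 := ⟨n - 2, by omega⟩
  have hq' : (1 : K) - q ≠ 0 := sub_ne_zero.mpr hq.symm
  have hD : ∀ a b : K, (q - 1) * s * ((a - b) / ((1 - q) * x)) = s * (b - a) / x := by
    intro a b
    field_simp
    ring
  have key := x_mul_qFib_add_two q m x s
  rw [Nat.add_sub_cancel, show m + 2 - 1 = m + 1 from rfl, hD]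
  generalize qFib q (m + 1) (q * x) s = b at key ⊢
  field_simp
  linear_combination key
end
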